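/- arXiv:2306.13282 — 4 statements merged into one kernel-verified Lean document; each statement's English description precedes it below -/
import Mathlib

section
/- If a graph G has bottleneck constant Δ, then odw(G) ≤ 4Δ + 3. -/
open SimpleGraph

universe u

/-- A tree-decomposition of `G`: a tree `T` with a bag `B t ⊆ V(G)` for each vertex `t`,
covering all vertices and edges, such that if `t₂` lies on the path of `T` between `t₁`
and `t₃` then `B t₁ ∩ B t₃ ⊆ B t₂`. -/
structure TreeDecomp {V W : Type*} (G : SimpleGraph V) (T : SimpleGraph W) (B : W → Set V) : Prop where
  isTree : T.IsTree
  coversVertices : ∀ v : V, ∃ t : W, v ∈ B t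
  coversEdges : ∀ ⦃u v : V⦄, G.Adj u v → ∃ t : W, u ∈ B t ∧ v ∈ B t
  interpolation : ∀ ⦃t₁ t₂ t₃ : W⦄ (p : T.Walk t₁ t₃), p.IsPath → t₂ ∈ p.support →
    B t₁ ∩ B t₃ ⊆ B t₂

/-- G satisfies the bottleneck property with constant k: for every geodesic path P of G of
even length between u and v with middle vertex w, every path of G between u and v contains
a vertex at distance at most k from w. -/
def BottleneckProp {V : Type*} (G : SimpleGraph V) (k : ℕ) : Prop :=
  ∀ (u v w : V) (P : G.Walk u v), P.IsPath → P.length = G.dist u v →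
    w ∈ P.support → G.dist u w = G.dist w v → 2 * G.dist u w = P.length →
    ∀ Q : G.Walk u v, ∃ z ∈ Q.support, G.dist w z ≤ k

section Helpers
variable {V : Type*} {G : SimpleGraph V}

lemma dist_tri {a b c : V} (h1 : G.Reachable a b) (h2 : G.Reachable b c) :
    G.dist a c ≤ G.dist a b + G.dist b c := by
  obtain ⟨p, hp⟩ := h1.exists_walk_length_eq_dist
  obtain ⟨q, hq⟩ := h2.exists_walk_length_eq_dist
  rw [← hp, ← hq, ← Walk.length_append]
  apply dist_le

lemma adj_dist_le {a b : V} (h : G.Adj a b) : G.dist a b ≤ 1 := by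
  simpa using dist_le (Walk.cons h Walk.nil)

/-- There is a walk from `u` to `p.getVert t` of length at most `t`. -/
lemma exists_walk_to_getVert {u v : V} (p : G.Walk u v) (t : ℕ) :
    ∃ w : G.Walk u (p.getVert t), w.length ≤ t := by
  induction p generalizing t with
  | nil => exact ⟨Walk.nil, by simp⟩
  | cons h q ih =>
    cases t with
    | zero => exact ⟨Walk.nil, by simp; rfl⟩
    | succ t =>
      obtain ⟨w, hw⟩ := ih t
      exact ⟨Walk.cons h w, by simpa using Nat.succ_le_succ hw⟩

/-- There is a walk from `p.getVert t` to `v` of length at most `p.length - t`. -/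
lemma exists_walk_from_getVert {u v : V} (p : G.Walk u v) (t : ℕ) :
    ∃ w : G.Walk (p.getVert t) v, w.length ≤ p.length - t := by
  induction p generalizing t with
  | nil => exact ⟨Walk.nil, by simp⟩
  | cons h q ih =>
    cases t with
    | zero => exact ⟨Walk.cons h q, by simp; exact Nat.le_refl _⟩
    | succ t =>
      obtain ⟨w, hw⟩ := ih t
      exact ⟨w, by simpa using hw.trans (by omega)⟩

lemma exists_walk_getVert_getVert {u v : V} (p : G.Walk u v) {s t : ℕ} (hst : s ≤ t) :
    ∃ w : G.Walk (p.getVert s) (p.getVert t), w.length ≤ t - s := by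
  induction p generalizing s t with
  | nil => exact ⟨Walk.nil, by simp⟩
  | cons h q ih =>
    cases s with
    | zero =>
      cases t with
      | zero => exact ⟨Walk.nil, by simp⟩
      | succ t =>
        obtain ⟨w, hw⟩ := exists_walk_to_getVert q t
        exact ⟨Walk.cons h w, Nat.succ_le_succ hw⟩
    | succ s =>
      cases t with
      | zero => omega
      | succ t =>
        obtain ⟨w, hw⟩ := ih (by omega : s ≤ t)
        exact ⟨w, by simpa using hw.trans (by omega)⟩

lemma reach_getVert {u v : V} (p : G.Walk u v) (t : ℕ) : G.Reachable u (p.getVert t) :=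
  ⟨(exists_walk_to_getVert p t).choose⟩

lemma dist_getVert_le {u v : V} (p : G.Walk u v) (t : ℕ) : G.dist u (p.getVert t) ≤ t := by
  obtain ⟨w, hw⟩ := exists_walk_to_getVert p t
  exact (dist_le w).trans hw

lemma dist_getVert_le' {u v : V} (p : G.Walk u v) (t : ℕ) :
    G.dist (p.getVert t) v ≤ p.length - t := by
  obtain ⟨w, hw⟩ := exists_walk_from_getVert p t
  exact (dist_le w).trans hw

/-- On a geodesic walk, the vertex at position `t` is at distance exactly `t` from the start
and `length - t` from the end. -/
lemma geodesic_getVert {r x : V} (γ : G.Walk r x) (hγ : γ.length = G.dist r x) {t : ℕ}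
    (ht : t ≤ γ.length) :
    G.dist r (γ.getVert t) = t ∧ G.dist (γ.getVert t) x = γ.length - t := by
  have h1 := dist_getVert_le γ t
  have h2 := dist_getVert_le' γ t
  have h3 : G.dist r x ≤ G.dist r (γ.getVert t) + G.dist (γ.getVert t) x :=
    dist_tri (reach_getVert γ t) ⟨(exists_walk_from_getVert γ t).choose⟩
  omega

lemma dist_split_of_mem_support {u v z : V} (p : G.Walk u v) (h : z ∈ p.support) :
    G.dist u z + G.dist z v ≤ p.length := by
  classical
  have hs := p.take_spec h
  have := congrArg Walk.length hs
  rw [Walk.length_append] at this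
  have h1 := dist_le (p.takeUntil z h)
  have h2 := dist_le (p.dropUntil z h)
  omega

lemma reach_of_mem_support {u v z : V} (p : G.Walk u v) (h : z ∈ p.support) :
    G.Reachable u z := by
  classical
  exact ⟨p.takeUntil z h⟩

/-- Midpoint lemma: apply the bottleneck property to a midpoint `w` of a geodesic. -/
lemma mid_near {k : ℕ} (hbp : BottleneckProp G k) {u v w : V}
    (hu : G.Reachable u w) (hv : G.Reachable w v)
    (h1 : G.dist u w = G.dist w v) (h2 : G.dist u w + G.dist w v = G.dist u v)
    (Q : G.Walk u v) : ∃ z ∈ Q.support, G.dist w z ≤ k := by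
  obtain ⟨P₁, hP₁⟩ := hu.exists_walk_length_eq_dist
  obtain ⟨P₂, hP₂⟩ := hv.exists_walk_length_eq_dist
  have hlen : (P₁.append P₂).length = G.dist u v := by
    rw [Walk.length_append]; omega
  refine hbp u v w (P₁.append P₂) ((P₁.append P₂).isPath_of_length_eq_dist hlen) hlen ?_ h1
    (by omega) Q
  rw [Walk.mem_support_append_iff]
  exact Or.inl P₁.end_mem_support

end Helpers

section Layers
variable {V : Type*} (G : SimpleGraph V)

/-- A fixed root in each connected component. -/
noncomputable def vroot (x : V) : V := (G.connectedComponentMk x).out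

/-- BFS layer: distance to the component's root. -/
noncomputable def ell (x : V) : ℕ := G.dist (vroot G x) x

variable {G}

lemma reach_vroot (x : V) : G.Reachable (vroot G x) x :=
  ConnectedComponent.eq.mp (G.connectedComponentMk x).out_eq

lemma vroot_eq_of_reach {x y : V} (h : G.Reachable x y) : vroot G x = vroot G y := by
  unfold vroot
  rw [ConnectedComponent.eq.mpr h]

lemma ell_eq_dist_of_reach {x y : V} (h : G.Reachable x y) :
    ell G y = G.dist (vroot G x) y := by
  unfold ell
  rw [vroot_eq_of_reach h]

private lemma dcomm (a b : V) : G.dist a b = G.dist b a := SimpleGraph.dist_comm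

/-- Core metric lemma, with an abstract root. -/
lemma layerBound_aux {k : ℕ} (hbp : BottleneckProp G k) {r u v : V} {i : ℕ}
    (hdru : G.dist r u = i) (hdrv : G.dist r v = i) (hru : G.Reachable r u)
    (Q : G.Walk u v) (hQd : ∀ z ∈ Q.support, i ≤ G.dist r z) :
    G.dist u v ≤ 4 * k + 1 := by
  have hrv : G.Reachable r v := hru.trans Q.reachable
  by_contra hcon
  push_neg at hcon
  by_cases hsmall : i ≤ 2 * k + 1
  · -- base case: close to the root
    have hm : G.dist u v ≤ 2 * i := by
      have := dist_tri hru.symm hrv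
      rw [dcomm u r] at this
      omega
    obtain ⟨z, hz, hzle⟩ := mid_near hbp hru.symm hrv
      (by rw [dcomm u r]; omega) (by rw [dcomm u r]; omega) Q
    have h1 := hQd z hz
    omega
  · push_neg at hsmall
    obtain ⟨γ, hγ⟩ := hru.exists_walk_length_eq_dist
    have hγlen : γ.length = i := by rw [hγ, hdru]
    obtain ⟨a, hia⟩ : ∃ a, i = a + (2 * k + 2) := ⟨i - (2*k+2), by omega⟩
    have hgeo : γ.length = G.dist r u := hγ
    have hga := geodesic_getVert γ hgeo (by omega : a ≤ γ.length)
    have hgy := geodesic_getVert γ hgeo (by omega : a + (k+1) ≤ γ.length)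
    have hryu' : G.Reachable r (γ.getVert a) := reach_getVert γ a
    have hryy : G.Reachable r (γ.getVert (a + (k+1))) := reach_getVert γ (a + (k+1))
    have hreachyu : G.Reachable (γ.getVert (a + (k+1))) u :=
      ⟨(exists_walk_from_getVert γ (a + (k+1))).choose⟩
    have hreachu'y : G.Reachable (γ.getVert a) (γ.getVert (a + (k+1))) :=
      ⟨(exists_walk_getVert_getVert γ (by omega : a ≤ a + (k+1))).choose⟩
    have hwuyd : G.dist (γ.getVert a) (γ.getVert (a + (k+1))) ≤ k + 1 := by
      obtain ⟨w, hw⟩ := exists_walk_getVert_getVert γ (by omega : a ≤ a + (k+1))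
      have := dist_le w
      omega
    set u' := γ.getVert a with hu'
    set y := γ.getVert (a + (k + 1)) with hy
    -- now all facts are phrased in terms of u', y
    have hdru' : G.dist r u' = a := hga.1
    have hdu'u : G.dist u' u = 2 * k + 2 := by
      have h := hga.2; omega
    have hdry : G.dist r y = a + (k+1) := hgy.1
    have hdyu : G.dist y u = k + 1 := by
      have h := hgy.2; omega
    have hdu'y : G.dist u' y = k + 1 := by
      have htri : G.dist u' u ≤ G.dist u' y + G.dist y u := dist_tri hreachu'y hreachyu
      omega
    have hduu' : G.dist u u' = 2 * k + 2 := by rw [dcomm]; exact hdu'u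
    -- the long walk u → v → r → u'
    obtain ⟨γv, hγv⟩ := hrv.exists_walk_length_eq_dist
    obtain ⟨γ', hγ'⟩ := hryu'.exists_walk_length_eq_dist
    obtain ⟨z, hzmem, hzle⟩ := mid_near hbp (u := u) (v := u') (w := y)
      hreachyu.symm hreachu'y.symm
      (by rw [dcomm u y, hdyu, dcomm y u', hdu'y])
      (by rw [dcomm u y, hdyu, dcomm y u', hdu'y, hduu']; omega)
      (Q.append (γv.reverse.append γ'))
    rw [Walk.mem_support_append_iff] at hzmem
    rcases hzmem with hzQ | hzmem
    · -- z on Q : too high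
      have h1 := hQd z hzQ
      have h2 : G.dist r z ≤ G.dist r y + G.dist y z :=
        dist_tri hryy (hreachyu.trans (reach_of_mem_support Q hzQ))
      omega
    · rw [Walk.mem_support_append_iff] at hzmem
      rcases hzmem with hzR | hzG
      · -- z on the reversed geodesic from v to r
        rw [Walk.support_reverse, List.mem_reverse] at hzR
        have hrz : G.Reachable r z := reach_of_mem_support γv hzR
        have hsplit : G.dist r z + G.dist z v ≤ γv.length := dist_split_of_mem_support γv hzR
        have hsplit2 : G.dist r v ≤ G.dist r z + G.dist z v := dist_tri hrz (hrz.symm.trans hrv)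
        have hlzdzv : G.dist r z + G.dist z v = i := by
          rw [hγv] at hsplit; omega
        have hlzlb : G.dist r y ≤ G.dist r z + G.dist z y :=
          dist_tri hrz (hrz.symm.trans hryy)
        have hcomm : G.dist z y = G.dist y z := dcomm z y
        have hm1 : G.dist u v ≤ G.dist u y + G.dist y z + G.dist z v := by
          have t1 : G.dist u v ≤ G.dist u z + G.dist z v :=
            dist_tri (hru.symm.trans hrz) (hrz.symm.trans hrv)
          have t2 : G.dist u z ≤ G.dist u y + G.dist y z :=
            dist_tri hreachyu.symm (hryy.symm.trans hrz)
          omega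
        have hcu : G.dist u y = k + 1 := by rw [dcomm u y, hdyu]
        -- equality forcing
        have hd : G.dist y z = k := by omega
        have hdzv : G.dist z v = 2 * k + 1 := by omega
        have hlz : G.dist r z = a + 1 := by omega
        have hduz : G.dist u z = 2 * k + 1 := by
          have t2 : G.dist u z ≤ G.dist u y + G.dist y z :=
            dist_tri hreachyu.symm (hryy.symm.trans hrz)
          have t3 : G.dist r u ≤ G.dist r z + G.dist z u :=
            dist_tri hrz (hrz.symm.trans hru)
          rw [dcomm z u] at t3
          omega
        -- z is an exact midpoint of u,v : contradiction with Q staying high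
        have hmeq : G.dist u v = 4 * k + 2 := by omega
        obtain ⟨q, hq, hqle⟩ := mid_near hbp (u := u) (v := v) (w := z)
          (hru.symm.trans hrz) (hrz.symm.trans hrv)
          (by omega) (by omega) Q
        have hq1 := hQd q hq
        have hq2 : G.dist r q ≤ G.dist r z + G.dist z q :=
          dist_tri hrz (hrz.symm.trans (hru.trans (reach_of_mem_support Q hq)))
        omega
      · -- z on the geodesic from r to u' : too low
        have hrz : G.Reachable r z := reach_of_mem_support γ' hzG
        have hsplit : G.dist r z + G.dist z u' ≤ γ'.length := dist_split_of_mem_support γ' hzG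
        have h2 : G.dist r y ≤ G.dist r z + G.dist z y :=
          dist_tri hrz (hrz.symm.trans hryy)
        have hcomm : G.dist z y = G.dist y z := dcomm z y
        rw [hγ', hdru'] at hsplit
        omega

end Layers

section Construction
variable {V : Type*} (G : SimpleGraph V)

/-- A chosen geodesic from the root to each vertex. -/
noncomputable def gwalk (x : V) : G.Walk (vroot G x) x :=
  (reach_vroot x).exists_walk_length_eq_dist.choose

lemma gwalk_length (x : V) : (gwalk G x).length = ell G x :=
  (reach_vroot x).exists_walk_length_eq_dist.choose_spec

/-- Ancestor of `x` at layer `i` (along the chosen geodesic). -/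
noncomputable def anc (i : ℕ) (x : V) : V := (gwalk G x).getVert i

variable {G}

lemma reach_anc (i : ℕ) (x : V) : G.Reachable (anc G i x) x :=
  ⟨(exists_walk_from_getVert (gwalk G x) i).choose⟩

lemma dist_vroot_anc {i : ℕ} {x : V} (h : i ≤ ell G x) :
    G.dist (vroot G x) (anc G i x) = i := by
  have := geodesic_getVert (gwalk G x) (gwalk_length G x) (t := i)
    (by rw [gwalk_length]; exact h)
  exact this.1

lemma ell_anc {i : ℕ} {x : V} (h : i ≤ ell G x) : ell G (anc G i x) = i := by
  have h1 : vroot G (anc G i x) = vroot G x := vroot_eq_of_reach (reach_anc i x)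
  unfold ell
  rw [h1]
  exact dist_vroot_anc h

lemma adj_anc {i : ℕ} {x : V} (h : ell G x = i + 1) : G.Adj (anc G i x) x := by
  have hlen : (gwalk G x).length = i + 1 := by rw [gwalk_length, h]
  have := (gwalk G x).adj_getVert_succ (i := i) (by omega)
  have h2 : (gwalk G x).getVert (i + 1) = x := by
    rw [← hlen, Walk.getVert_length]
  rw [h2] at this
  exact this

/-- Connectivity within layers `≥ i`. -/
def ReachAbove (i : ℕ) (x y : V) : Prop :=
  ∃ w : G.Walk x y, ∀ z ∈ w.support, i ≤ ell G z

lemma ReachAbove.reach {i : ℕ} {x y : V} (h : ReachAbove (G := G) i x y) : G.Reachable x y :=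
  ⟨h.choose⟩

lemma reachAbove_refl {i : ℕ} {x : V} (h : i ≤ ell G x) : ReachAbove (G := G) i x x :=
  ⟨Walk.nil, by simpa using h⟩

lemma ReachAbove.symm {i : ℕ} {x y : V} : ReachAbove (G := G) i x y → ReachAbove (G := G) i y x := by
  rintro ⟨w, hw⟩
  exact ⟨w.reverse, by intro z hz; rw [Walk.support_reverse, List.mem_reverse] at hz; exact hw z hz⟩

lemma ReachAbove.trans {i : ℕ} {x y z : V} :
    ReachAbove (G := G) i x y → ReachAbove (G := G) i y z → ReachAbove (G := G) i x z := by
  rintro ⟨w1, h1⟩ ⟨w2, h2⟩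
  refine ⟨w1.append w2, ?_⟩
  intro z hz
  rw [Walk.mem_support_append_iff] at hz
  rcases hz with hz | hz
  · exact h1 z hz
  · exact h2 z hz

variable (G)

/-- Vertices of layer exactly `i`. -/
def SubV (i : ℕ) : Type _ := {x : V // ell G x = i}

instance aboveSetoid (i : ℕ) : Setoid (SubV G i) where
  r a b := ReachAbove (G := G) i a.1 b.1
  iseqv := ⟨fun a => reachAbove_refl (le_of_eq a.2.symm),
    fun h => h.symm, fun h1 h2 => h1.trans h2⟩

/-- Clusters at layer `i`. -/
def NodeT (i : ℕ) : Type _ := Quotient (aboveSetoid G i)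

/-- Tree nodes: a layer plus a cluster. -/
def NodeSig : Type _ := Σ i : ℕ, NodeT G i

/-- Tree vertices: nodes plus a global root `none`. -/
def WT : Type _ := Option (NodeSig G)

/-- The parent cluster of a cluster at layer `i+1`. -/
noncomputable def parentFun (i : ℕ) : NodeT G (i+1) → NodeT G i :=
  Quotient.map
    (fun x => (⟨anc G i x.1, ell_anc (by rw [x.2]; omega)⟩ : SubV G i))
    (by
      rintro a b hab
      obtain ⟨w, hw⟩ := (hab : ReachAbove (G := G) (i+1) a.1 b.1)
      refine ⟨Walk.cons (adj_anc a.2) (w.append (Walk.cons (adj_anc b.2).symm Walk.nil)), ?_⟩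
      intro z hz
      rw [Walk.support_cons, List.mem_cons] at hz
      rcases hz with rfl | hz
      · rw [ell_anc (by rw [a.2]; omega)]
      rw [Walk.mem_support_append_iff] at hz
      rcases hz with hz | hz
      · exact le_of_lt (by have := hw z hz; omega)
      · rw [Walk.support_cons, List.mem_cons] at hz
        rcases hz with rfl | hz
        · rw [b.2]; omega
        · rw [Walk.support_nil, List.mem_singleton] at hz
          subst hz
          rw [ell_anc (by rw [b.2]; omega)])

/-- Parent in the tree. -/
noncomputable def par : WT G → WT G
  | none => none
  | some ⟨0, _⟩ => none
  | some ⟨i+1, c⟩ => some ⟨i, parentFun G i c⟩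

def rank : WT G → ℕ
  | none => 0
  | some ⟨i, _⟩ => i + 1

lemma rank_par (w : WT G) (h : w ≠ none) : rank G (par G w) + 1 = rank G w := by
  match w with
  | none => exact absurd rfl h
  | some ⟨0, c⟩ => simp [par, rank]
  | some ⟨i+1, c⟩ => simp [par, rank]

lemma par_none : par G (none : WT G) = none := rfl

/-- The decomposition tree. -/
noncomputable def TT : SimpleGraph (WT G) where
  Adj a b := (a = par G b ∨ b = par G a) ∧ a ≠ b
  symm := by
    constructor
    rintro a b ⟨h, hne⟩
    exact ⟨h.symm, hne.symm⟩
  loopless := by constructor; rintro a ⟨h, hne⟩; exact hne rfl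

lemma parent_of_adj {a b : WT G} (h : (TT G).Adj a b) (hr : rank G b ≤ rank G a) :
    b = par G a := by
  rcases h with ⟨h, hne⟩
  rcases h with h | h
  · -- a = par b
    by_cases hb : b = none
    · subst hb
      rw [par_none] at h
      exact absurd h hne
    · have := rank_par G b hb
      rw [← h] at this
      omega
  · exact h

lemma adj_par {a : WT G} (h : a ≠ none) : (TT G).Adj a (par G a) := by
  refine ⟨Or.inr rfl, ?_⟩
  intro he
  have := rank_par G a h
  rw [← he] at this
  omega

lemma reach_none : ∀ (n : ℕ) (a : WT G), rank G a ≤ n → (TT G).Reachable a none := by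
  intro n
  induction n with
  | zero =>
    intro a ha
    have : a = none := by
      match a with
      | none => rfl
      | some ⟨i, c⟩ => simp [rank] at ha
    rw [this]
    exact Reachable.refl _
  | succ n ih =>
    intro a ha
    by_cases h : a = none
    · rw [h]
      exact Reachable.refl _
    · refine ((adj_par G h).reachable).trans (ih (par G a) ?_)
      have := rank_par G a h
      omega

lemma TT_connected : (TT G).Connected := by
  have : ∀ a : WT G, (TT G).Reachable a none := fun a => reach_none G (rank G a) a le_rfl
  rw [connected_iff]
  exact ⟨fun a b => (this a).trans (this b).symm, ⟨none⟩⟩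

end Construction

section Acyclic
variable {V : Type*} {G : SimpleGraph V}

lemma list_exists_max {α : Type*} (f : α → ℕ) :
    ∀ (l : List α), l ≠ [] → ∃ m ∈ l, ∀ x ∈ l, f x ≤ f m := by
  intro l
  induction l with
  | nil => intro h; exact absurd rfl h
  | cons a t ih =>
    intro _
    rcases eq_or_ne t [] with rfl | hne
    · exact ⟨a, by simp, by simp⟩
    · obtain ⟨m, hm, hmax⟩ := ih hne
      rcases le_total (f a) (f m) with h | h
      · exact ⟨m, by simp [hm], by
          intro x hx
          rcases List.mem_cons.mp hx with rfl | hx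
          · exact h
          · exact hmax x hx⟩
      · exact ⟨a, by simp, by
          intro x hx
          rcases List.mem_cons.mp hx with rfl | hx
          · exact le_rfl
          · exact (hmax x hx).trans h⟩

lemma support_tail_eq {u v : V} (p : G.Walk u v) :
    p.support.tail = (List.range p.length).map (fun j => p.getVert (j+1)) := by
  induction p with
  | nil => simp
  | cons h q ih =>
    rw [Walk.support_cons, List.tail_cons, Walk.length_cons, List.range_succ_eq_map,
      List.map_cons, List.map_map]
    conv_lhs => rw [Walk.support_eq_cons q, ih]
    simp [Function.comp_def, Walk.getVert_cons_succ]

lemma getVert_mem_support {u v : V} (p : G.Walk u v) {t : ℕ} (ht : t ≤ p.length) :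
    p.getVert t ∈ p.support :=
  Walk.mem_support_iff_exists_getVert.mpr ⟨t, rfl, ht⟩

lemma cycle_getVert_inj {u : V} (p : G.Walk u u) (hnd : p.support.tail.Nodup)
    {s t : ℕ} (hs : 1 ≤ s) (hs' : s ≤ p.length) (ht : 1 ≤ t) (ht' : t ≤ p.length)
    (heq : p.getVert s = p.getVert t) : s = t := by
  rw [support_tail_eq] at hnd
  have hlen : ((List.range p.length).map (fun j => p.getVert (j+1))).length = p.length := by
    simp
  have h1 : ((List.range p.length).map (fun j => p.getVert (j+1)))[s-1]'(by omega) =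
      p.getVert s := by
    simp only [List.getElem_map, List.getElem_range]
    congr 1
    omega
  have h2 : ((List.range p.length).map (fun j => p.getVert (j+1)))[t-1]'(by omega) =
      p.getVert t := by
    simp only [List.getElem_map, List.getElem_range]
    congr 1
    omega
  have := (hnd.getElem_inj_iff (i := s-1) (hi := by omega) (j := t-1) (hj := by omega)).mp
    (by rw [h1, h2, heq])
  omega

variable (G)

lemma TT_acyclic : (TT G).IsAcyclic := by
  classical
  intro v c hc
  obtain ⟨m, hm, hmax⟩ := list_exists_max (rank G) c.support c.support_ne_nil
  set c' := c.rotate m hm with hc'def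
  have hc'cyc : c'.IsCycle := hc.rotate hm
  have hsub : ∀ x ∈ c'.support, rank G x ≤ rank G m := by
    intro x hx
    rw [Walk.support_eq_cons] at hx
    rcases List.mem_cons.mp hx with rfl | hx
    · exact hmax _ hm
    · have hrot := Walk.support_rotate c m hm
      have : x ∈ c.support.tail := hrot.mem_iff.mp hx
      exact hmax x (List.mem_of_mem_tail this)
  have hlen3 := hc'cyc.three_le_length
  have hadj1 : (TT G).Adj m (c'.getVert 1) := by
    have := c'.adj_getVert_succ (i := 0) (by omega)
    rwa [Walk.getVert_zero] at this
  have hadj2 : (TT G).Adj (c'.getVert (c'.length - 1)) m := by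
    have := c'.adj_getVert_succ (i := c'.length - 1) (by omega)
    rwa [show c'.length - 1 + 1 = c'.length by omega, c'.getVert_length] at this
  have h1 : c'.getVert 1 = par G m :=
    parent_of_adj G hadj1 (hsub _ (getVert_mem_support c' (by omega)))
  have h2 : c'.getVert (c'.length - 1) = par G m :=
    parent_of_adj G hadj2.symm (hsub _ (getVert_mem_support c' (by omega)))
  have heq := cycle_getVert_inj c' hc'cyc.support_nodup (s := 1) (t := c'.length - 1)
    le_rfl (by omega) (by omega) (by omega) (h1.trans h2.symm)
  omega

lemma TT_isTree : (TT G).IsTree :=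
  ⟨TT_connected G, TT_acyclic G⟩

end Acyclic

section Bags
variable {V : Type*} (G : SimpleGraph V)

/-- The bag of a tree node. -/
noncomputable def Bag : WT G → Set V
  | none => ∅
  | some ⟨i, c⟩ => {x | (∃ h : ell G x = i, (⟦(⟨x, h⟩ : SubV G i)⟧ : NodeT G i) = c) ∨
      (∃ h : ell G x = i + 1,
        (⟦(⟨anc G i x, ell_anc (by rw [h]; omega)⟩ : SubV G i)⟧ : NodeT G i) = c)}

/-- The canonical node of a vertex at its own layer. -/
noncomputable def nodeLow (i : ℕ) (x : V) (h : ell G x = i) : WT G :=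
  some ⟨i, (⟦(⟨x, h⟩ : SubV G i)⟧ : NodeT G i)⟩

variable {G}

lemma nodeLow_irrel {x : V} {i j : ℕ} (hi : ell G x = i) (hj : ell G x = j) :
    nodeLow G i x hi = nodeLow G j x hj := by
  subst hi; subst hj; rfl

lemma nodeLow_ne_none {i : ℕ} {x : V} (h : ell G x = i) : nodeLow G i x h ≠ none := by
  simp [nodeLow]
  exact Option.some_ne_none _

lemma par_nodeLow {x : V} {i : ℕ} (h : ell G x = i + 1) :
    par G (nodeLow G (i+1) x h) =
      some ⟨i, (⟦(⟨anc G i x, ell_anc (by rw [h]; omega)⟩ : SubV G i)⟧ : NodeT G i)⟩ := by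
  simp only [nodeLow, par, parentFun, Quotient.map_mk]
  rfl

lemma mem_bag_nodeLow (x : V) : x ∈ Bag G (nodeLow G (ell G x) x rfl) :=
  Or.inl ⟨rfl, rfl⟩

lemma bag_mem_class {x : V} {t : WT G} (hx : x ∈ Bag G t) :
    t = nodeLow G (ell G x) x rfl ∨ t = par G (nodeLow G (ell G x) x rfl) := by
  match t with
  | none => exact absurd hx (by simp [Bag])
  | some ⟨i, c⟩ =>
    simp only [Bag, Set.mem_setOf_eq] at hx
    rcases hx with ⟨h, hc⟩ | ⟨h, hc⟩
    · left
      rw [← nodeLow_irrel h rfl]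
      simp [nodeLow, hc]
      rfl
    · right
      rw [← nodeLow_irrel h rfl, par_nodeLow h]
      simp [hc]
      rfl

/-- Each bag element is within distance 1 of a canonical vertex of the cluster. -/
lemma bag_mem_near {x : V} {i : ℕ} {c : NodeT G i} (hx : x ∈ Bag G (some ⟨i, c⟩)) :
    ∃ x₀ : SubV G i, c = ⟦x₀⟧ ∧ G.dist x x₀.1 ≤ 1 ∧ G.Reachable x x₀.1 := by
  simp only [Bag, Set.mem_setOf_eq] at hx
  rcases hx with ⟨h, hc⟩ | ⟨h, hc⟩
  · exact ⟨⟨x, h⟩, hc.symm, by simp [SimpleGraph.dist_self], Reachable.refl x⟩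
  · refine ⟨⟨anc G i x, ell_anc (by rw [h]; omega)⟩, hc.symm, ?_, (reach_anc i x).symm⟩
    rw [dcomm]
    exact adj_dist_le (adj_anc h)

/-- Bags have weak diameter at most `4k+3`. -/
lemma bag_bound {k : ℕ} (hbp : BottleneckProp G k) {t : WT G} {u v : V}
    (hu : u ∈ Bag G t) (hv : v ∈ Bag G t) : G.dist u v ≤ 4 * k + 3 := by
  match t with
  | none => exact absurd hu (by simp [Bag])
  | some ⟨i, c⟩ =>
    obtain ⟨u₀, hcu, hdu, hru⟩ := bag_mem_near hu
    obtain ⟨v₀, hcv, hdv, hrv⟩ := bag_mem_near hv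
    have hrel : ReachAbove (G := G) i u₀.1 v₀.1 :=
      Quotient.exact (hcu.symm.trans hcv)
    obtain ⟨Q, hQ⟩ := hrel
    have hmain : G.dist u₀.1 v₀.1 ≤ 4 * k + 1 := by
      refine layerBound_aux hbp (r := vroot G u₀.1) (i := i) ?_ ?_ (reach_vroot u₀.1) Q ?_
      · exact u₀.2
      · rw [← ell_eq_dist_of_reach Q.reachable]
        exact v₀.2
      · intro z hz
        rw [← ell_eq_dist_of_reach (reach_of_mem_support Q hz)]
        exact hQ z hz
    have hq : G.Reachable u₀.1 v₀.1 := ⟨Q⟩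
    have t1 : G.dist u v ≤ G.dist u u₀.1 + G.dist u₀.1 v :=
      dist_tri hru (hq.trans hrv.symm)
    have t2 : G.dist u₀.1 v ≤ G.dist u₀.1 v₀.1 + G.dist v₀.1 v :=
      dist_tri hq hrv.symm
    have t3 : G.dist v₀.1 v ≤ 1 := by rw [dcomm]; exact hdv
    omega

lemma covers_vertices (x : V) : ∃ t : WT G, x ∈ Bag G t :=
  ⟨_, mem_bag_nodeLow x⟩

lemma ell_adj_le {u v : V} (h : G.Adj u v) : ell G v ≤ ell G u + 1 := by
  rw [ell_eq_dist_of_reach h.reachable]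
  have h1 : G.dist (vroot G u) v ≤ G.dist (vroot G u) u + G.dist u v :=
    dist_tri (reach_vroot u) h.reachable
  have h2 : G.dist u v ≤ 1 := adj_dist_le h
  have : G.dist (vroot G u) u = ell G u := rfl
  omega

lemma covers_edges_aux {u v : V} (h : G.Adj u v) (hle : ell G u ≤ ell G v) :
    ∃ t : WT G, u ∈ Bag G t ∧ v ∈ Bag G t := by
  refine ⟨nodeLow G (ell G u) u rfl, mem_bag_nodeLow u, ?_⟩
  have hub := ell_adj_le h
  rcases (by omega : ell G v = ell G u ∨ ell G v = ell G u + 1) with hv | hv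
  · simp only [nodeLow, Bag, Set.mem_setOf_eq]
    left
    refine ⟨hv, Quotient.sound ?_⟩
    refine ⟨Walk.cons h.symm Walk.nil, ?_⟩
    intro z hz
    simp only [Walk.support_cons, Walk.support_nil, List.mem_cons, List.mem_singleton] at hz
    rcases hz with rfl | rfl | hz
    · omega
    · omega
    · exact absurd hz (by simp)
  · simp only [nodeLow, Bag, Set.mem_setOf_eq]
    right
    refine ⟨hv, Quotient.sound ?_⟩
    refine ⟨Walk.cons (adj_anc hv) (Walk.cons h.symm Walk.nil), ?_⟩
    intro z hz
    simp only [Walk.support_cons, Walk.support_nil, List.mem_cons, List.mem_singleton] at hz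
    have hanc : ell G (anc G (ell G u) v) = ell G u := ell_anc (by omega)
    rcases hz with rfl | rfl | rfl | hz
    · omega
    · omega
    · omega
    · exact absurd hz (by simp)

lemma covers_edges {u v : V} (h : G.Adj u v) : ∃ t : WT G, u ∈ Bag G t ∧ v ∈ Bag G t := by
  rcases le_total (ell G u) (ell G v) with hle | hle
  · exact covers_edges_aux h hle
  · obtain ⟨t, h1, h2⟩ := covers_edges_aux h.symm hle
    exact ⟨t, h2, h1⟩

lemma isPath_loop_nil {W' : Type*} {T : SimpleGraph W'} {a : W'} (p : T.Walk a a)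
    (h : p.IsPath) : p = Walk.nil := by
  cases p with
  | nil => rfl
  | cons hadj q =>
    exfalso
    have hnd := h.support_nodup
    rw [Walk.support_cons] at hnd
    exact (List.nodup_cons.mp hnd).1 q.end_mem_support

lemma interpolation_holds {t₁ t₂ t₃ : WT G} (p : (TT G).Walk t₁ t₃) (hp : p.IsPath)
    (ht₂ : t₂ ∈ p.support) : Bag G t₁ ∩ Bag G t₃ ⊆ Bag G t₂ := by
  rintro x ⟨hx₁, hx₃⟩
  by_cases heq : t₁ = t₃
  · subst heq
    have := isPath_loop_nil p hp
    subst this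
    simp only [Walk.support_nil, List.mem_singleton] at ht₂
    subst ht₂
    exact hx₁
  · -- t₁ ≠ t₃, so {t₁, t₃} = {N, par N}
    set N := nodeLow G (ell G x) x rfl with hN
    have hadj : (TT G).Adj t₁ t₃ := by
      rcases bag_mem_class hx₁ with h1 | h1 <;> rcases bag_mem_class hx₃ with h3 | h3
      · exact absurd (h1.trans h3.symm) heq
      · rw [h1, h3]
        exact adj_par G (nodeLow_ne_none rfl)
      · rw [h1, h3]
        exact (adj_par G (nodeLow_ne_none rfl)).symm
      · exact absurd (h1.trans h3.symm) heq
    -- by uniqueness of paths in a tree, p is the single edge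
    obtain ⟨p₀, _, huniq⟩ := (isTree_iff_existsUnique_path.mp (TT_isTree G)).2 t₁ t₃
    have hpe : p = Walk.cons hadj Walk.nil := by
      rw [huniq p hp, huniq (Walk.cons hadj Walk.nil) (by simp [Walk.cons_isPath_iff, heq])]
    subst hpe
    simp only [Walk.support_cons, Walk.support_nil, List.mem_cons, List.mem_singleton] at ht₂
    rcases ht₂ with rfl | rfl | h
    · exact hx₁
    · exact hx₃
    · exact absurd h (by simp)

end Bags

/-- If G has bottleneck constant Δ, then odw(G) ≤ 4Δ + 3: G admits a tree-decomposition of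
outer diameter at most 4Δ + 3. -/
theorem stmt_14 {V : Type u} [Nonempty V] (G : SimpleGraph V) (Δ : ℕ)
    (hbp : BottleneckProp G Δ) (hmin : ∀ j : ℕ, BottleneckProp G j → Δ ≤ j) :
    ∃ (W : Type u) (T : SimpleGraph W) (B : W → Set V), TreeDecomp G T B ∧
      ∀ t, ∀ u ∈ B t, ∀ v ∈ B t, G.dist u v ≤ 4 * Δ + 3 := by
  refine ⟨WT G, TT G, Bag G, ⟨TT_isTree G, covers_vertices, fun u v h => covers_edges h,
    fun t₁ t₂ t₃ p hp ht => interpolation_holds p hp ht⟩, ?_⟩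
  intro t u hu v hv
  exact bag_bound hbp hu hv
end

section
/- If a graph G admits a spanning tree T with cycle-distortion d (i.e., for every edge uv of G the path of T between u and v has length at most d), then idw(G) ≤ 2d: G has a tree-decomposition whose bags each induce a connected subgraph of diameter at most 2d. Specifically, taking the tree T with bag B_t = the ball of radius d in T around t gives such a tree-decomposition. -/
open SimpleGraph

section Helpers

variable {V : Type*} {G : SimpleGraph V}

private lemma tree_path_length {T : SimpleGraph V} (hT : T.IsTree) {u v : V}
    (p : T.Walk u v) (hp : p.IsPath) : p.length = T.dist u v := by
  obtain ⟨q, hq, hql⟩ := hT.isConnected.exists_path_of_dist u v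
  have h := hT.IsAcyclic.path_unique ⟨p, hp⟩ ⟨q, hq⟩
  rw [← hql]
  exact congrArg Walk.length (congrArg Subtype.val h)

private lemma isPath_append' {a b c : V} {p : G.Walk a b} {q : G.Walk b c}
    (hp : p.IsPath) (hq : q.IsPath) (hsep : ∀ x, x ∈ p.support → x ∈ q.support → x = b) :
    (p.append q).IsPath := by
  rw [Walk.isPath_def, Walk.support_append, List.nodup_append']
  refine ⟨hp.support_nodup, hq.support_nodup.tail, ?_⟩
  intro x hxp hxq
  have hx := hsep x hxp (List.mem_of_mem_tail hxq)
  subst hx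
  have := hq.support_nodup
  rw [q.support_eq_cons] at this
  exact (List.nodup_cons.mp this).1 hxq

private lemma takeUntil_dichotomy [DecidableEq V] {a b : V} (r : G.Walk a b) (x y : V)
    (hx : x ∈ r.support) (hy : y ∈ r.support) :
    y ∈ (r.takeUntil x hx).support ∨ x ∈ (r.takeUntil y hy).support := by
  induction r with
  | nil =>
    simp only [Walk.mem_support_nil_iff] at hx hy
    subst hx; subst hy
    left; exact Walk.start_mem_support _
  | @cons a a' b h q ih =>
    by_cases hax : a = x
    · subst hax; right; exact Walk.start_mem_support _
    by_cases hay : a = y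
    · subst hay; left; exact Walk.start_mem_support _
    have hx' : x ∈ q.support := by
      rw [Walk.support_cons, List.mem_cons] at hx
      exact hx.resolve_left fun h1 => hax h1.symm
    have hy' : y ∈ q.support := by
      rw [Walk.support_cons, List.mem_cons] at hy
      exact hy.resolve_left fun h1 => hay h1.symm
    have ex : (Walk.cons h q).takeUntil x hx = Walk.cons h (q.takeUntil x hx') := by
      simp [Walk.takeUntil, hax]
    have ey : (Walk.cons h q).takeUntil y hy = Walk.cons h (q.takeUntil y hy') := by
      simp [Walk.takeUntil, hay]
    rw [ex, ey]
    rcases ih hx' hy' with h1 | h1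
    · left; simp [h1]
    · right; simp [h1]

/-- Balls are convex in trees: any vertex on the path between `t₁` and `t₃` is at
distance from `v` at most the maximum of the distances of `t₁` and `t₃` from `v`. -/
private lemma tree_ball_convex {T : SimpleGraph V} (hT : T.IsTree) {t₁ t₂ t₃ v : V}
    (p : T.Walk t₁ t₃) (hp : p.IsPath) (ht₂ : t₂ ∈ p.support) :
    T.dist t₂ v ≤ max (T.dist t₁ v) (T.dist t₃ v) := by
  classical
  obtain ⟨r, hr, hrlen⟩ := hT.isConnected.exists_path_of_dist t₂ v
  set p1 := p.takeUntil t₂ ht₂ with hp1def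
  set p2 := p.dropUntil t₂ ht₂ with hp2def
  have hp1 : p1.IsPath := hp.takeUntil ht₂
  have hp2 : p2.IsPath := hp.dropUntil ht₂
  -- supports of p1 and p2 only share t₂
  have hsep : ∀ x, x ∈ p1.support → x ∈ p2.support → x = t₂ := by
    intro x hx1 hx2
    have hnd : (p1.support ++ p2.support.tail).Nodup := by
      rw [← Walk.support_append, Walk.take_spec p ht₂]
      exact hp.support_nodup
    rw [p2.support_eq_cons, List.mem_cons] at hx2
    rcases hx2 with h | h
    · exact h
    · exact absurd hx1 (fun hx1 => (List.nodup_append'.mp hnd).2.2 hx1 h)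
  -- dichotomy: r meets p1 or p2 only at t₂
  have key : (∀ x, x ∈ p1.support → x ∈ r.support → x = t₂) ∨
      (∀ x, x ∈ p2.support → x ∈ r.support → x = t₂) := by
    by_contra hcon
    push_neg at hcon
    obtain ⟨⟨x, hx1, hxr, hxne⟩, ⟨y, hy2, hyr, hyne⟩⟩ := hcon
    have hx1' : x ∈ p1.reverse.support := by rwa [Walk.support_reverse, List.mem_reverse]
    -- initial segments of r coincide with segments of p1.reverse / p2
    have e1 : (p1.reverse.takeUntil x hx1' : T.Walk t₂ x) = r.takeUntil x hxr := by
      have h := hT.IsAcyclic.path_unique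
        ⟨p1.reverse.takeUntil x hx1', hp1.reverse.takeUntil hx1'⟩
        ⟨r.takeUntil x hxr, hr.takeUntil hxr⟩
      exact congrArg Subtype.val h
    have e2 : (p2.takeUntil y hy2 : T.Walk t₂ y) = r.takeUntil y hyr := by
      have h := hT.IsAcyclic.path_unique
        ⟨p2.takeUntil y hy2, hp2.takeUntil hy2⟩
        ⟨r.takeUntil y hyr, hr.takeUntil hyr⟩
      exact congrArg Subtype.val h
    rcases takeUntil_dichotomy r x y hxr hyr with h1 | h1
    · rw [← e1] at h1
      have : y ∈ p1.support := by
        have := Walk.support_takeUntil_subset _ hx1' h1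
        rwa [Walk.support_reverse, List.mem_reverse] at this
      exact hyne (hsep y this hy2)
    · rw [← e2] at h1
      have : x ∈ p2.support := Walk.support_takeUntil_subset _ hy2 h1
      exact hxne (hsep x hx1 this)
  rcases key with hk | hk
  · -- p1.append r is a path from t₁ to v
    have hpath : (p1.append r).IsPath := isPath_append' hp1 hr hk
    have hlen := tree_path_length hT _ hpath
    rw [Walk.length_append, hrlen] at hlen
    calc T.dist t₂ v ≤ p1.length + T.dist t₂ v := Nat.le_add_left _ _
      _ = T.dist t₁ v := hlen
      _ ≤ max (T.dist t₁ v) (T.dist t₃ v) := le_max_left _ _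
  · have hk' : ∀ x, x ∈ p2.reverse.support → x ∈ r.support → x = t₂ := by
      intro x hx hxr
      rw [Walk.support_reverse, List.mem_reverse] at hx
      exact hk x hx hxr
    have hpath : (p2.reverse.append r).IsPath := isPath_append' hp2.reverse hr hk'
    have hlen := tree_path_length hT _ hpath
    rw [Walk.length_append, Walk.length_reverse, hrlen] at hlen
    calc T.dist t₂ v ≤ p2.length + T.dist t₂ v := Nat.le_add_left _ _
      _ = T.dist t₃ v := hlen
      _ ≤ max (T.dist t₁ v) (T.dist t₃ v) := le_max_right _ _

end Helpers

/-- If T is a spanning tree of a connected graph G with cycle-distortion at most d (for every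
edge uv of G the T-path between u and v has length at most d), then taking the tree T with
bag B t = the ball of radius d in T around t gives a tree-decomposition of G whose bags
each induce a connected subgraph of diameter at most 2d; hence idw(G) ≤ 2d. -/
theorem stmt_15 {V : Type*} (G : SimpleGraph V) (hG : G.Connected)
    (T : SimpleGraph V) (hT : T.IsTree) (hle : T ≤ G) (d : ℕ)
    (hdist : ∀ u v : V, G.Adj u v → T.dist u v ≤ d) :
    TreeDecomp G T (fun t => {v : V | T.dist t v ≤ d}) ∧
      ∀ t : V, ∀ u ∈ {v : V | T.dist t v ≤ d}, ∀ v ∈ {v : V | T.dist t v ≤ d},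
        ∃ P : G.Walk u v, P.length ≤ 2 * d ∧ ∀ x ∈ P.support, T.dist t x ≤ d := by
  classical
  constructor
  · refine ⟨hT, ?_, ?_, ?_⟩
    · intro v
      exact ⟨v, by simp [SimpleGraph.dist_self]⟩
    · intro u v huv
      exact ⟨u, by simp [SimpleGraph.dist_self], by simpa using hdist u v huv⟩
    · intro t₁ t₂ t₃ p hp ht₂ v hv
      obtain ⟨hv1, hv3⟩ := hv
      simp only [Set.mem_setOf_eq] at hv1 hv3 ⊢
      exact (tree_ball_convex hT p hp ht₂).trans (max_le hv1 hv3)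
  · intro t u hu v hv
    simp only [Set.mem_setOf_eq] at hu hv
    obtain ⟨pu, hpu, hpul⟩ := hT.isConnected.exists_path_of_dist u t
    obtain ⟨pv, hpv, hpvl⟩ := hT.isConnected.exists_path_of_dist t v
    refine ⟨(pu.append pv).mapLe hle, ?_, ?_⟩
    · rw [Walk.mapLe, Walk.length_map, Walk.length_append, hpul, hpvl, two_mul]
      exact Nat.add_le_add (by rwa [T.dist_comm]) hv
    · intro x hx
      have hx' : x ∈ (pu.append pv).support := by
        rw [Walk.mapLe, Walk.support_map] at hx
        simpa using hx
      rw [Walk.mem_support_append_iff] at hx'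
      rcases hx' with h | h
      · have h1 : T.dist x t ≤ (pu.dropUntil x h).length := dist_le _
        have h2 := pu.length_dropUntil_le h
        rw [T.dist_comm]
        exact h1.trans (h2.trans_eq hpul) |>.trans (by rwa [T.dist_comm])
      · have h1 : T.dist t x ≤ (pv.takeUntil x h).length := dist_le _
        have h2 := pv.length_takeUntil_le h
        exact h1.trans (h2.trans_eq hpvl) |>.trans hv
end

section
/- Let T be a tree and r a vertex of T; for any vertex t of T and subset B_t ⊆ V(G) from a tree-decomposition of a connected graph G, define β(t) ∈ B_t minimizing d_G(β(t), β(r)) where β(r) ∈ B_r is fixed. Then for every edge st of T with s between t and r, d_G(β(s), β(r)) ≤ d_G(β(t), β(r)); consequently, defining ℓ(e) = |d_G(β(t), β(r)) − d_G(β(s), β(r))| for each edge e = st, the sum of ℓ over the edges of the T-path from t to r equals d_G(β(t), β(r)). -/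
open SimpleGraph

section Aux

variable {V W : Type*} {G : SimpleGraph V} {T : SimpleGraph W} {B : W → Set V}

/-- If `s` is on every path from `a` to `r`, it is on every walk from `a` to `r`. -/
lemma walk_mem_of_path_mem [DecidableEq W] {s a r : W}
    (h : ∀ p : T.Walk a r, p.IsPath → s ∈ p.support) (q : T.Walk a r) : s ∈ q.support :=
  q.support_bypass_subset (h q.bypass q.bypass_isPath)

/-- Transfer of the "on every walk to r" property across a bag membership. -/
lemma bag_transfer [DecidableEq W] (hTD : TreeDecomp G T B) {s a c r : W} {u : V}
    (hua : u ∈ B a) (huc : u ∈ B c) (hus : u ∉ B s)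
    (hPa : ∀ q : T.Walk a r, s ∈ q.support) : ∀ q : T.Walk c r, s ∈ q.support := by
  intro q
  obtain ⟨w⟩ := hTD.isTree.isConnected a c
  have hns : s ∉ w.bypass.support := by
    intro hs
    exact hus (hTD.interpolation w.bypass w.bypass_isPath hs ⟨hua, huc⟩)
  have := hPa (w.bypass.append q)
  rw [SimpleGraph.Walk.support_append] at this
  rcases List.mem_append.mp this with h | h
  · exact absurd h hns
  · exact List.mem_of_mem_tail h

/-- Separation: a `G`-walk all of whose vertices avoid `B s`, starting in a bag `B a`
with `a` "behind" `s`, ends in bags that are also "behind" `s`. -/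
lemma sep [DecidableEq W] (hTD : TreeDecomp G T B) {s r : W} {x y : V} (q : G.Walk x y) :
    ∀ {a : W}, x ∈ B a → (∀ q' : T.Walk a r, s ∈ q'.support) →
      (∀ v ∈ q.support, v ∉ B s) → ∀ b : W, y ∈ B b → ∀ q' : T.Walk b r, s ∈ q'.support := by
  induction q with
  | nil =>
    intro a hxa hPa hq b hyb
    exact bag_transfer hTD hxa hyb (hq _ (SimpleGraph.Walk.start_mem_support _)) hPa
  | cons h p ih =>
    intro a hxa hPa hq b hyb
    obtain ⟨c, huc, hvc⟩ := hTD.coversEdges h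
    have hus := hq _ (SimpleGraph.Walk.start_mem_support _)
    have hPc := bag_transfer hTD hxa huc hus hPa
    exact ih hvc hPc (fun z hz => hq z (List.mem_cons_of_mem _ hz)) b hyb

end Aux

/-- For a tree-decomposition (T, B) of a connected graph G with all bags nonempty, a root r,
and β t ∈ B t chosen at minimum G-distance from β r: for every edge st of T with s between
t and r we have d_G(β s, β r) ≤ d_G(β t, β r); consequently, with ℓ(st) = |d_G(β t, β r) −
d_G(β s, β r)|, the sum of ℓ over the edges of the T-path from t to r equals d_G(β t, β r). -/
theorem stmt_17 {V W : Type*} (G : SimpleGraph V) (hG : G.Connected)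
    (T : SimpleGraph W) (B : W → Set V) (hTD : TreeDecomp G T B)
    (r : W) (β : W → V) (hβ : ∀ t : W, β t ∈ B t)
    (hmin : ∀ t : W, ∀ x ∈ B t, G.dist (β t) (β r) ≤ G.dist x (β r)) :
    (∀ s t : W, T.Adj s t → (∀ p : T.Walk t r, p.IsPath → s ∈ p.support) →
      G.dist (β s) (β r) ≤ G.dist (β t) (β r)) ∧
    (∀ (t : W) (p : T.Walk t r), p.IsPath →
      (p.darts.map (fun dd =>
        ((G.dist (β dd.toProd.1) (β r) : ℤ) - (G.dist (β dd.toProd.2) (β r) : ℤ)).natAbs)).sum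
        = G.dist (β t) (β r)) := by
  classical
  have part1 : ∀ s t : W, (∀ p : T.Walk t r, p.IsPath → s ∈ p.support) →
      G.dist (β s) (β r) ≤ G.dist (β t) (β r) := by
    intro s t hst
    by_cases hsr : s = r
    · subst hsr; simp [SimpleGraph.dist_self]
    have hPt : ∀ q : T.Walk t r, s ∈ q.support := walk_mem_of_path_mem hst
    obtain ⟨q, hq⟩ := hG.exists_walk_length_eq_dist (β t) (β r)
    by_cases hmem : ∃ v ∈ q.support, v ∈ B s
    · obtain ⟨v, hvq, hvs⟩ := hmem
      have h1 : G.dist (β s) (β r) ≤ G.dist v (β r) := hmin s v hvs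
      have h2 : G.dist v (β r) ≤ (q.dropUntil v hvq).length := SimpleGraph.dist_le _
      have h3 : (q.dropUntil v hvq).length ≤ q.length := by
        conv_rhs => rw [← q.take_spec hvq]
        rw [SimpleGraph.Walk.length_append]
        omega
      omega
    · exfalso
      push_neg at hmem
      have := sep hTD q (hβ t) hPt hmem r (hβ r) SimpleGraph.Walk.nil
      simp only [SimpleGraph.Walk.support_nil, List.mem_singleton] at this
      exact hsr this
  have part2 : ∀ {t u : W} (p : T.Walk t u), r = u → p.IsPath →
      (p.darts.map (fun dd =>
        ((G.dist (β dd.toProd.1) (β r) : ℤ) - (G.dist (β dd.toProd.2) (β r) : ℤ)).natAbs)).sum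
        = G.dist (β t) (β r) := by
    intro t u p
    induction p with
    | nil =>
      rintro rfl _
      simp [SimpleGraph.dist_self]
    | @cons a b u h p' ih =>
      rintro rfl hp
      have hp' : p'.IsPath := hp.of_cons
      have hb : G.dist (β b) (β r) ≤ G.dist (β a) (β r) := by
        apply part1
        intro q hq
        have : q = (SimpleGraph.Walk.cons h p') := by
          have := hTD.isTree.2.path_unique ⟨q, hq⟩ ⟨SimpleGraph.Walk.cons h p', hp⟩
          exact congrArg Subtype.val this
        rw [this]
        simp
      have hsum := ih rfl hp'
      simp only [SimpleGraph.Walk.darts_cons, List.map_cons, List.sum_cons, hsum]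
      omega
  exact ⟨fun s t _ h => part1 s t h, fun t p hp => part2 p rfl hp⟩
end

section
/- Let G be a connected graph, choose r ∈ V(G), and let L_i = {v : d_G(v, r) = i}. For i ≥ 0, call u, v ∈ L_i equivalent if there is a u–v path of G whose internal vertices all lie in L_i ∪ L_{i+1} ∪ ···; let M be the set of all equivalence classes over all i. Define a tree T on M where classes A ∈ M_i and B ∈ M_{i−1} are adjacent iff some vertex of A is adjacent in G to some vertex of B; each A ∈ M_i with i ≥ 1 has a unique neighbour (parent) in M_{i−1}. Setting W_A = A ∪ (parent of A) (and W_A = A if A has no parent), the pair (T, (W_A : A ∈ M)) is a tree-decomposition of G. -/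
open SimpleGraph

variable {V : Type*}

/-- The i-th level: vertices at distance i from the root r. -/
def level (G : SimpleGraph V) (r : V) (i : ℕ) : Set V := {v : V | G.dist v r = i}

/-- The equivalence class at level i of a vertex u ∈ L_i: all v ∈ L_i joined to u by a path
whose internal vertices lie in L_i ∪ L_{i+1} ∪ ···. -/
def ClassOf (G : SimpleGraph V) (r : V) (i : ℕ) (u : V) : Set V :=
  {v : V | v ∈ level G r i ∧
    ∃ p : G.Walk u v, ∀ w ∈ p.support, w = u ∨ w = v ∨ i ≤ G.dist w r}

/-- The set of all equivalence classes, over all levels. -/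
def Classes (G : SimpleGraph V) (r : V) : Set (Set V) :=
  {A : Set V | ∃ (i : ℕ) (u : V), u ∈ level G r i ∧ A = ClassOf G r i u}

/-- The graph on the classes: two distinct classes are adjacent iff some vertex of one is
adjacent in G to some vertex of the other. -/
def ClassGraph (G : SimpleGraph V) (r : V) : SimpleGraph (Classes G r) where
  Adj A B := A ≠ B ∧ ∃ a ∈ (A : Set V), ∃ b ∈ (B : Set V), G.Adj a b
  symm := by
    constructor
    rintro A B ⟨hne, a, ha, b, hb, hab⟩
    exact ⟨hne.symm, b, hb, a, ha, hab.symm⟩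
  loopless := by constructor; rintro A ⟨hne, -⟩; exact hne rfl

/-- The bag of a class A: A together with its parent class (the class at the next level down
containing a neighbour of a vertex of A). -/
def classBag (G : SimpleGraph V) (r : V) (A : Classes G r) : Set V :=
  (A : Set V) ∪ {x : V | ∃ (i : ℕ) (b : V), b ∈ level G r i ∧ x ∈ ClassOf G r i b ∧
    ∃ a ∈ (A : Set V), G.Adj a b ∧ a ∈ level G r (i + 1)}

section Aux

variable {V : Type*} {G : SimpleGraph V} {r : V}

lemma mem_level {v : V} {i : ℕ} : v ∈ level G r i ↔ G.dist v r = i := Iff.rfl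

lemma aux_dist_adj (hG : G.Connected) {u v : V} (h : G.Adj u v) :
    G.dist u r ≤ G.dist v r + 1 := by
  have h1 : G.dist u v = 1 := SimpleGraph.dist_eq_one_iff_adj.mpr h
  have h2 := hG.dist_triangle (u := u) (v := v) (w := r)
  omega

lemma mem_classOf_iff {i : ℕ} {u v : V} (hu : u ∈ level G r i) :
    v ∈ ClassOf G r i u ↔
      G.dist v r = i ∧ ∃ p : G.Walk u v, ∀ w ∈ p.support, i ≤ G.dist w r := by
  constructor
  · rintro ⟨hv, p, hp⟩
    refine ⟨hv, p, fun w hw => ?_⟩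
    rcases hp w hw with rfl | rfl | h
    · exact le_of_eq (mem_level.mp hu).symm
    · exact le_of_eq (mem_level.mp hv).symm
    · exact h
  · rintro ⟨hv, p, hp⟩
    exact ⟨hv, p, fun w hw => Or.inr (Or.inr (hp w hw))⟩

lemma mem_classOf_self {i : ℕ} {u : V} (hu : u ∈ level G r i) : u ∈ ClassOf G r i u :=
  ⟨hu, SimpleGraph.Walk.nil, fun w hw => Or.inl (by simpa using hw)⟩

lemma classOf_symm {i : ℕ} {u v : V} (hu : u ∈ level G r i) (h : v ∈ ClassOf G r i u) :
    u ∈ ClassOf G r i v := by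
  rw [mem_classOf_iff hu] at h
  obtain ⟨hv, p, hp⟩ := h
  rw [mem_classOf_iff hv]
  refine ⟨mem_level.mp hu, p.reverse, fun w hw => hp w ?_⟩
  rwa [SimpleGraph.Walk.support_reverse, List.mem_reverse] at hw

lemma classOf_trans {i : ℕ} {u v w : V} (hu : u ∈ level G r i) (hv : v ∈ level G r i)
    (h1 : v ∈ ClassOf G r i u) (h2 : w ∈ ClassOf G r i v) : w ∈ ClassOf G r i u := by
  rw [mem_classOf_iff hu] at h1 ⊢
  rw [mem_classOf_iff hv] at h2
  obtain ⟨-, p, hp⟩ := h1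
  obtain ⟨hw, q, hq⟩ := h2
  refine ⟨hw, p.append q, fun x hx => ?_⟩
  rcases (SimpleGraph.Walk.mem_support_append_iff p q).mp hx with hx | hx
  · exact hp x hx
  · exact hq x hx

lemma classOf_eq {i : ℕ} {u v : V} (hu : u ∈ level G r i) (h : v ∈ ClassOf G r i u) :
    ClassOf G r i u = ClassOf G r i v := by
  have hv : v ∈ level G r i := ((mem_classOf_iff hu).mp h).1
  ext w
  exact ⟨fun hw => classOf_trans hv hu (classOf_symm hu h) hw,
    fun hw => classOf_trans hu hv h hw⟩

/-- The level of a class. -/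
noncomputable def lvl (A : Classes G r) : ℕ := A.2.choose

lemma lvl_spec (A : Classes G r) :
    ∃ u, u ∈ level G r (lvl A) ∧ (A : Set V) = ClassOf G r (lvl A) u :=
  A.2.choose_spec

lemma mem_level_of_mem {A : Classes G r} {v : V} (hv : v ∈ (A : Set V)) :
    G.dist v r = lvl A := by
  obtain ⟨u, hu, hA⟩ := lvl_spec A
  rw [hA] at hv
  exact ((mem_classOf_iff hu).mp hv).1

lemma class_nonempty (A : Classes G r) : ∃ v, v ∈ (A : Set V) := by
  obtain ⟨u, hu, hA⟩ := lvl_spec A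
  exact ⟨u, hA ▸ mem_classOf_self hu⟩

lemma class_eq_classOf {A : Classes G r} {a : V} (ha : a ∈ (A : Set V)) :
    (A : Set V) = ClassOf G r (lvl A) a := by
  obtain ⟨u, hu, hA⟩ := lvl_spec A
  rw [hA]
  exact classOf_eq hu (by rw [← hA]; exact ha)

lemma lvl_eq {A : Classes G r} {i : ℕ} {b : V} (hb : b ∈ level G r i)
    (hA : (A : Set V) = ClassOf G r i b) : lvl A = i := by
  have hbA : b ∈ (A : Set V) := hA ▸ mem_classOf_self hb
  have h1 := mem_level_of_mem hbA
  have h2 := mem_level.mp hb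
  omega

lemma classes_eq_of_adj_level {a b : V} {i : ℕ} (ha : a ∈ level G r i) (hb : b ∈ level G r i)
    (hab : G.Adj a b) : ClassOf G r i a = ClassOf G r i b := by
  apply classOf_eq ha
  rw [mem_classOf_iff ha]
  refine ⟨mem_level.mp hb, SimpleGraph.Walk.cons hab SimpleGraph.Walk.nil, fun w hw => ?_⟩
  simp only [SimpleGraph.Walk.support_cons, SimpleGraph.Walk.support_nil, List.mem_cons,
    List.mem_singleton] at hw
  rcases hw with rfl | rfl | h
  · exact le_of_eq (mem_level.mp ha).symm
  · exact le_of_eq (mem_level.mp hb).symm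
  · simp at h

lemma adj_lvl (hG : G.Connected) {A B : Classes G r} (h : (ClassGraph G r).Adj A B) :
    lvl A = lvl B + 1 ∨ lvl B = lvl A + 1 := by
  obtain ⟨hne, a, ha, b, hb, hab⟩ := h
  have hla := mem_level_of_mem ha
  have hlb := mem_level_of_mem hb
  have h1 := aux_dist_adj (r := r) hG hab
  have h2 := aux_dist_adj (r := r) hG hab.symm
  have hne' : lvl A ≠ lvl B := by
    intro hEq
    apply hne
    apply Subtype.ext
    rw [class_eq_classOf ha, class_eq_classOf hb, ← hEq]
    exact classes_eq_of_adj_level (mem_level.mpr hla) (mem_level.mpr (by omega)) hab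
  omega

lemma parent_unique (hG : G.Connected) {A B B' : Classes G r} (h : (ClassGraph G r).Adj A B)
    (h' : (ClassGraph G r).Adj A B') (hB : lvl B + 1 = lvl A) (hB' : lvl B' + 1 = lvl A) :
    B = B' := by
  obtain ⟨-, a, ha, b, hb, hab⟩ := h
  obtain ⟨-, a', ha', b', hb', hab'⟩ := h'
  have hla : G.dist a r = lvl B + 1 := by have := mem_level_of_mem ha; omega
  have hla' : G.dist a' r = lvl B + 1 := by have := mem_level_of_mem ha'; omega
  have hlb : G.dist b r = lvl B := mem_level_of_mem hb
  have hlb' : G.dist b' r = lvl B := by have := mem_level_of_mem hb'; omega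
  have haa : a' ∈ ClassOf G r (lvl B + 1) a := by
    have hAa := class_eq_classOf ha
    rw [← hB] at hAa
    rw [← hAa]
    exact ha'
  obtain ⟨-, p, hp⟩ := (mem_classOf_iff (mem_level.mpr hla)).mp haa
  have hbb : b' ∈ ClassOf G r (lvl B) b := by
    rw [mem_classOf_iff (mem_level.mpr hlb)]
    refine ⟨hlb', SimpleGraph.Walk.cons hab.symm
      (p.append (SimpleGraph.Walk.cons hab' SimpleGraph.Walk.nil)), fun w hw => ?_⟩
    simp only [SimpleGraph.Walk.support_cons, List.mem_cons] at hw
    rcases hw with rfl | hw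
    · omega
    rcases (SimpleGraph.Walk.mem_support_append_iff _ _).mp hw with hw | hw
    · have := hp w hw; omega
    · simp only [SimpleGraph.Walk.support_cons, SimpleGraph.Walk.support_nil, List.mem_cons,
        List.mem_singleton] at hw
      rcases hw with rfl | rfl | h
      · omega
      · omega
      · simp at h
  apply Subtype.ext
  rw [class_eq_classOf hb, class_eq_classOf hb']
  have e1 : lvl B' = lvl B := by omega
  rw [e1]
  exact classOf_eq (mem_level.mpr hlb) hbb

lemma exists_parent_vertex (hG : G.Connected) {v : V} {i : ℕ} (h : G.dist v r = i + 1) :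
    ∃ b, G.Adj v b ∧ G.dist b r = i := by
  obtain ⟨p, hp⟩ := hG.exists_walk_length_eq_dist v r
  rw [h] at hp
  cases p with
  | nil => simp at hp
  | @cons _ b _ hadj q =>
    refine ⟨b, hadj, ?_⟩
    have h1 : G.dist b r ≤ i := by
      have := SimpleGraph.dist_le q
      simp only [SimpleGraph.Walk.length_cons] at hp
      omega
    have h2 := aux_dist_adj (r := r) hG hadj
    omega

lemma exists_parent (hG : G.Connected) (A : Classes G r) {i : ℕ} (h : lvl A = i + 1) :
    ∃ B : Classes G r, (ClassGraph G r).Adj A B ∧ lvl B = i := by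
  obtain ⟨a, ha⟩ := class_nonempty A
  have hla : G.dist a r = i + 1 := by have := mem_level_of_mem ha; omega
  obtain ⟨b, hab, hb⟩ := exists_parent_vertex hG hla
  refine ⟨⟨ClassOf G r i b, i, b, hb, rfl⟩, ⟨?_, a, ha, b, mem_classOf_self hb, hab⟩,
    lvl_eq (A := ⟨ClassOf G r i b, i, b, hb, rfl⟩) hb rfl⟩
  intro hAB
  have hlB : lvl (⟨ClassOf G r i b, i, b, hb, rfl⟩ : Classes G r) = i :=
    lvl_eq (A := ⟨ClassOf G r i b, i, b, hb, rfl⟩) hb rfl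
  rw [hAB, hlB] at h
  omega

lemma root_mem_level : r ∈ level G r 0 := mem_level.mpr (SimpleGraph.dist_self)

lemma eq_root (hG : G.Connected) {A : Classes G r} (h : lvl A = 0) :
    (A : Set V) = ClassOf G r 0 r := by
  obtain ⟨a, ha⟩ := class_nonempty A
  have hla : G.dist a r = 0 := by have := mem_level_of_mem ha; omega
  have har : a = r := hG.dist_eq_zero_iff.mp hla
  have := class_eq_classOf ha
  rw [h, har] at this
  exact this

lemma classGraph_connected (hG : G.Connected) : (ClassGraph G r).Connected := by
  have R : Classes G r := ⟨ClassOf G r 0 r, 0, r, root_mem_level, rfl⟩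
  have key : ∀ (i : ℕ) (A : Classes G r), lvl A = i →
      (ClassGraph G r).Reachable A ⟨ClassOf G r 0 r, 0, r, root_mem_level, rfl⟩ := by
    intro i
    induction i with
    | zero =>
      intro A h
      have : A = ⟨ClassOf G r 0 r, 0, r, root_mem_level, rfl⟩ := Subtype.ext (eq_root hG h)
      rw [this]
    | succ i ih =>
      intro A h
      obtain ⟨B, hAB, hB⟩ := exists_parent hG A h
      exact (SimpleGraph.Adj.reachable hAB).trans (ih B hB)
  have : Nonempty (Classes G r) := ⟨⟨ClassOf G r 0 r, 0, r, root_mem_level, rfl⟩⟩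
  exact SimpleGraph.Connected.mk (fun A B => ((key _ A rfl).trans (key _ B rfl).symm))

lemma no_cycle_max (hG : G.Connected) {M : Classes G r} (c : (ClassGraph G r).Walk M M)
    (hc : c.IsCycle) (hmax : ∀ x ∈ c.support, lvl x ≤ lvl M) : False := by
  cases c with
  | nil => exact SimpleGraph.Walk.IsCycle.not_of_nil hc
  | @cons _ B₁ _ h q =>
    rw [SimpleGraph.Walk.cons_isCycle_iff] at hc
    obtain ⟨hq, he⟩ := hc
    have hnn : ¬ q.reverse.Nil := SimpleGraph.Walk.not_nil_of_ne h.ne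
    obtain ⟨y, h', q', hq'⟩ := SimpleGraph.Walk.not_nil_iff.mp hnn
    have hedge : s(M, y) ∈ q.edges := by
      have h0 : s(M, y) ∈ q.reverse.edges := by rw [hq']; simp
      rwa [SimpleGraph.Walk.edges_reverse, List.mem_reverse] at h0
    have hys : y ∈ q.support := q.snd_mem_support_of_mem_edges hedge
    have hb_le : lvl B₁ ≤ lvl M := hmax B₁ (by simp)
    have hy_le : lvl y ≤ lvl M := hmax y (by simp [hys])
    have h1 : lvl B₁ + 1 = lvl M := by rcases adj_lvl hG h with h2 | h2 <;> omega
    have h2 : lvl y + 1 = lvl M := by rcases adj_lvl hG h' with h2 | h2 <;> omega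
    have hby : B₁ = y := parent_unique hG h h' h1 h2
    rw [← hby] at hedge
    exact he hedge

lemma classGraph_acyclic (hG : G.Connected) : (ClassGraph G r).IsAcyclic := by
  classical
  intro A c hc
  have hfin : {x | x ∈ c.support}.Finite := c.support.finite_toSet
  obtain ⟨M, hM, hmax⟩ := Set.exists_max_image {x | x ∈ c.support} lvl hfin
    ⟨A, c.start_mem_support⟩
  refine no_cycle_max hG (c.rotate M hM) (hc.rotate hM) (fun x hx => hmax x ?_)
  rcases (SimpleGraph.Walk.mem_support_append_iff _ _).mp hx with hx | hx
  · exact SimpleGraph.Walk.support_dropUntil_subset c hM hx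
  · exact SimpleGraph.Walk.support_takeUntil_subset c hM hx

end Aux

section Bag

variable {V : Type*} {G : SimpleGraph V} {r : V}

/-- The class of a vertex. -/
noncomputable def classOfV (G : SimpleGraph V) (r x : V) : Classes G r :=
  ⟨ClassOf G r (G.dist x r) x, G.dist x r, x, mem_level.mpr rfl, rfl⟩

lemma mem_classOfV {x : V} : x ∈ (classOfV G r x : Set V) :=
  mem_classOf_self (mem_level.mpr rfl)

lemma lvl_classOfV {x : V} : lvl (classOfV G r x) = G.dist x r :=
  lvl_eq (A := classOfV G r x) (mem_level.mpr rfl) rfl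

lemma mem_classBag_iff (hG : G.Connected) {A : Classes G r} {x : V} :
    x ∈ classBag G r A ↔ A = classOfV G r x ∨
      ((ClassGraph G r).Adj A (classOfV G r x) ∧ lvl A = lvl (classOfV G r x) + 1) := by
  constructor
  · rintro (ha | ⟨i, b, hb, hxb, a, haA, hab, hai⟩)
    · left
      apply Subtype.ext
      have h1 := class_eq_classOf ha
      have h2 := mem_level_of_mem ha
      rw [h1, ← h2]
      rfl
    · right
      have hxi : G.dist x r = i := ((mem_classOf_iff hb).mp hxb).1
      have hCb : (classOfV G r x : Set V) = ClassOf G r i b := by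
        show ClassOf G r (G.dist x r) x = ClassOf G r i b
        rw [hxi]
        exact (classOf_eq hb hxb).symm
      have hbC : b ∈ (classOfV G r x : Set V) := by
        rw [hCb]; exact mem_classOf_self hb
      have hlA : lvl A = i + 1 := by
        have h3 := mem_level_of_mem haA
        have h4 := mem_level.mp hai
        omega
      have hlC : lvl (classOfV G r x) = i := by rw [lvl_classOfV]; exact hxi
      refine ⟨⟨?_, a, haA, b, hbC, hab⟩, by omega⟩
      intro hEq
      rw [hEq, hlC] at hlA
      omega
  · rintro (rfl | ⟨⟨hne, a, ha, b, hb, hab⟩, hlvl⟩)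
    · exact Or.inl mem_classOfV
    · right
      have hlb := mem_level_of_mem hb
      have hla := mem_level_of_mem ha
      rw [lvl_classOfV] at hlvl hlb
      refine ⟨G.dist x r, b, mem_level.mpr hlb, ?_, a, ha, hab, mem_level.mpr (by omega)⟩
      have hC := class_eq_classOf hb
      rw [lvl_classOfV] at hC
      rw [← hC]
      exact mem_classOfV

end Bag

/-- For a connected graph G with root r, the graph on the equivalence classes is a tree, and
together with the bags W_A = A ∪ (parent of A) it forms a tree-decomposition of G. -/
theorem stmt_18 (G : SimpleGraph V) (hG : G.Connected) (r : V) :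
    (ClassGraph G r).IsTree ∧ TreeDecomp G (ClassGraph G r) (classBag G r) := by
  have htree : (ClassGraph G r).IsTree := ⟨classGraph_connected hG, classGraph_acyclic hG⟩
  refine ⟨htree, htree, fun v => ⟨classOfV G r v, Or.inl mem_classOfV⟩, ?_, ?_⟩
  · -- coversEdges
    intro u v h
    have h1 := aux_dist_adj (r := r) hG h
    have h2 := aux_dist_adj (r := r) hG h.symm
    rcases eq_or_ne (G.dist u r) (G.dist v r) with hEq | hne
    · refine ⟨classOfV G r u, Or.inl mem_classOfV, Or.inl ?_⟩
      show v ∈ ClassOf G r (G.dist u r) u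
      rw [mem_classOf_iff (mem_level.mpr rfl)]
      refine ⟨hEq.symm, SimpleGraph.Walk.cons h SimpleGraph.Walk.nil, fun w hw => ?_⟩
      simp only [SimpleGraph.Walk.support_cons, SimpleGraph.Walk.support_nil, List.mem_cons,
        List.mem_singleton] at hw
      rcases hw with rfl | rfl | hw
      · omega
      · omega
      · simp at hw
    · have hd : G.dist u r = G.dist v r + 1 ∨ G.dist v r = G.dist u r + 1 := by omega
      rcases hd with hd | hd
      · exact ⟨classOfV G r u, Or.inl mem_classOfV,
          Or.inr ⟨G.dist v r, v, mem_level.mpr rfl, mem_classOf_self (mem_level.mpr rfl),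
            u, mem_classOfV, h, mem_level.mpr hd⟩⟩
      · exact ⟨classOfV G r v, Or.inr ⟨G.dist u r, u, mem_level.mpr rfl,
          mem_classOf_self (mem_level.mpr rfl), v, mem_classOfV, h.symm, mem_level.mpr hd⟩,
          Or.inl mem_classOfV⟩
  · -- interpolation
    intro t₁ t₂ t₃ p hp ht₂ x hx
    obtain ⟨hx1, hx3⟩ := hx
    rw [mem_classBag_iff hG] at hx1 hx3
    rw [mem_classBag_iff hG]
    have huniq : ∀ ⦃a b : Classes G r⦄ (p q : (ClassGraph G r).Path a b), p = q :=
      SimpleGraph.isAcyclic_iff_path_unique.mp (classGraph_acyclic (r := r) hG)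
    by_cases h13 : t₁ = t₃
    · subst h13
      have hnil : p = SimpleGraph.Walk.nil := by
        have := SimpleGraph.Path.loop_eq (⟨p, hp⟩ : (ClassGraph G r).Path t₁ t₁)
        exact congrArg Subtype.val this
      rw [hnil] at ht₂
      simp only [SimpleGraph.Walk.support_nil, List.mem_singleton] at ht₂
      subst ht₂
      exact hx1
    rcases hx1 with h1 | ⟨hadj1, hl1⟩
    · rcases hx3 with h3 | ⟨hadj3, hl3⟩
      · exact absurd (h1.trans h3.symm) h13
      · -- t₁ is the class of x, t₃ is a child
        rw [← h1] at hadj3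
        have hq : (SimpleGraph.Walk.cons hadj3.symm SimpleGraph.Walk.nil :
            (ClassGraph G r).Walk t₁ t₃).IsPath := by
          rw [SimpleGraph.Walk.cons_isPath_iff]
          exact ⟨SimpleGraph.Walk.IsPath.nil, by simpa using h13⟩
        have hpq : p = SimpleGraph.Walk.cons hadj3.symm SimpleGraph.Walk.nil :=
          Subtype.ext_iff.mp (huniq ⟨p, hp⟩ ⟨_, hq⟩)
        rw [hpq] at ht₂
        simp only [SimpleGraph.Walk.support_cons, SimpleGraph.Walk.support_nil,
          List.mem_cons, List.mem_singleton] at ht₂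
        rcases ht₂ with rfl | rfl | h
        · exact Or.inl h1
        · rw [← h1]
          exact Or.inr ⟨hadj3, by rwa [← h1] at hl3⟩
        · simp at h
    · rcases hx3 with h3 | ⟨hadj3, hl3⟩
      · -- t₃ is the class of x, t₁ is a child
        rw [← h3] at hadj1
        have hq : (SimpleGraph.Walk.cons hadj1 SimpleGraph.Walk.nil :
            (ClassGraph G r).Walk t₁ t₃).IsPath := by
          rw [SimpleGraph.Walk.cons_isPath_iff]
          exact ⟨SimpleGraph.Walk.IsPath.nil, by simpa using h13⟩
        have hpq : p = SimpleGraph.Walk.cons hadj1 SimpleGraph.Walk.nil :=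
          Subtype.ext_iff.mp (huniq ⟨p, hp⟩ ⟨_, hq⟩)
        rw [hpq] at ht₂
        simp only [SimpleGraph.Walk.support_cons, SimpleGraph.Walk.support_nil,
          List.mem_cons, List.mem_singleton] at ht₂
        rcases ht₂ with rfl | rfl | h
        · rw [← h3]
          exact Or.inr ⟨hadj1, by rwa [← h3] at hl1⟩
        · exact Or.inl h3
        · simp at h
      · -- both children of the class of x
        have hq : (SimpleGraph.Walk.cons hadj1 (SimpleGraph.Walk.cons hadj3.symm
            SimpleGraph.Walk.nil) : (ClassGraph G r).Walk t₁ t₃).IsPath := by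
          rw [SimpleGraph.Walk.cons_isPath_iff, SimpleGraph.Walk.cons_isPath_iff]
          refine ⟨⟨SimpleGraph.Walk.IsPath.nil, by simpa using hadj3.ne.symm⟩, ?_⟩
          simp only [SimpleGraph.Walk.support_cons, SimpleGraph.Walk.support_nil,
            List.mem_cons, List.mem_singleton]
          push_neg
          exact ⟨hadj1.ne, h13, by simp⟩
        have hpq : p = SimpleGraph.Walk.cons hadj1 (SimpleGraph.Walk.cons hadj3.symm
            SimpleGraph.Walk.nil) :=
          Subtype.ext_iff.mp (huniq ⟨p, hp⟩ ⟨_, hq⟩)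
        rw [hpq] at ht₂
        simp only [SimpleGraph.Walk.support_cons, SimpleGraph.Walk.support_nil,
          List.mem_cons, List.mem_singleton] at ht₂
        rcases ht₂ with rfl | rfl | rfl | h
        · exact Or.inr ⟨hadj1, hl1⟩
        · exact Or.inl rfl
        · exact Or.inr ⟨hadj3, hl3⟩
        · simp at h
end
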